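/- Let A be a finite-dimensional k-algebra, G a finite-dimensional right A-module, Λ = End_A(G), and I = add G. A morphism g : M → Y with Y ∈ I is a minimal left I-approximation of M if and only if Hom_A(g, G) : Hom_A(Y, G) → Hom_A(M, G) is a projective cover in the category of right Λ^op-modules. -/

import Mathlib

universe u

/-- Right minimality. -/
def RightMinimal {R X M : Type*} [Ring R] [AddCommGroup X] [Module R X]
    [AddCommGroup M] [Module R M] (f : X →ₗ[R] M) : Prop :=
  ∀ h : X →ₗ[R] X, f.comp h = f → Function.Bijective h

/-- Left minimality. -/
def LeftMinimal {R M Y : Type*} [Ring R] [AddCommGroup M] [Module R M]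
    [AddCommGroup Y] [Module R Y] (g : M →ₗ[R] Y) : Prop :=
  ∀ h : Y →ₗ[R] Y, h.comp g = g → Function.Bijective h

/-- `Z` belongs to `add G`. -/
def InAdd (R : Type u) [Ring R] (G Z : Type u) [AddCommGroup G] [Module R G]
    [AddCommGroup Z] [Module R Z] : Prop :=
  ∃ (m : ℕ) (p : (Fin m → G) →ₗ[R] Z) (s : Z →ₗ[R] (Fin m → G)), p.comp s = LinearMap.id

/-- `Hom_A(g, G)`: precomposition with `g`, as a morphism of left `Λ = End_A(G)`-modules. -/
def precompEnd {R : Type u} [Ring R] {G M Y : Type u} [AddCommGroup G] [Module R G]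
    [AddCommGroup M] [Module R M] [AddCommGroup Y] [Module R Y] (g : M →ₗ[R] Y) :
    (Y →ₗ[R] G) →ₗ[Module.End R G] (M →ₗ[R] G) where
  toFun f := f.comp g
  map_add' f₁ f₂ := by ext; simp
  map_smul' l f := by ext; simp

/-- A projective cover: a right minimal epimorphism from a projective module. -/
def IsProjectiveCover {S P N : Type*} [Ring S] [AddCommGroup P] [Module S P]
    [AddCommGroup N] [Module S N] (p : P →ₗ[S] N) : Prop :=
  Module.Projective S P ∧ Function.Surjective p ∧ RightMinimal p

/-!
`Hom_A(-, G)` is fully faithful on `add G`: a splitting `Y → G^m → Y` writes every `f : Y → G` as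
`∑ (f ∘ p ∘ ιᵢ) • (πᵢ ∘ s)` over `Λ = End_A(G)`, so `Λ`-linear maps between the `Hom`-modules come
from morphisms, and `Hom_A(Y, G)` is a summand of `Hom_A(G^m, G) ≅ Λ^m`, hence projective.
Since every `Z ∈ add G` is a summand of some `G^n`, the approximation property only needs testing
against `G`, i.e. it is surjectivity of `Hom_A(g, G)`; full faithfulness then matches left minimality
of `g` with right minimality of `Hom_A(g, G)`.
-/

section precompEnd

variable {R : Type u} [Ring R] {G M Y Z : Type u} [AddCommGroup G] [Module R G]
  [AddCommGroup M] [Module R M] [AddCommGroup Y] [Module R Y] [AddCommGroup Z] [Module R Z]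

@[simp]
theorem precompEnd_apply (g : M →ₗ[R] Y) (f : Y →ₗ[R] G) : precompEnd g f = f ∘ₗ g := rfl

theorem precompEnd_id : precompEnd (G := G) (LinearMap.id : Y →ₗ[R] Y) = LinearMap.id := rfl

theorem precompEnd_comp (h : Y →ₗ[R] Z) (g : M →ₗ[R] Y) :
    precompEnd (G := G) (h ∘ₗ g) = precompEnd g ∘ₗ precompEnd h := rfl

theorem bijective_precompEnd_of_bijective {h : M →ₗ[R] Y} (hh : Function.Bijective h) :
    Function.Bijective (precompEnd (G := G) h) := by
  let e := LinearEquiv.ofBijective h hh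
  refine Function.bijective_iff_has_inverse.mpr
    ⟨precompEnd (G := G) e.symm.toLinearMap, fun f => ?_, fun f => ?_⟩
  · ext y; exact congrArg f (e.apply_symm_apply y)
  · ext y; exact congrArg f (e.symm_apply_apply y)

theorem sum_smul_comp_single_eq {m : ℕ} {p : (Fin m → G) →ₗ[R] Y} {s : Y →ₗ[R] Fin m → G}
    (hps : p ∘ₗ s = LinearMap.id) (f : Y →ₗ[R] G) :
    ∑ i, (f ∘ₗ p ∘ₗ LinearMap.single R (fun _ => G) i) • (LinearMap.proj i ∘ₗ s) = f := by
  ext y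
  simp only [LinearMap.sum_apply, LinearMap.smul_apply, LinearMap.coe_comp, LinearMap.coe_proj,
    Function.comp_apply, Function.eval, Module.End.smul_def, LinearMap.coe_single]
  rw [← map_sum, ← map_sum, Finset.univ_sum_single]
  exact congrArg f (LinearMap.congr_fun hps y)

end precompEnd

namespace InAdd

variable {R : Type u} [Ring R] {G M Y Z : Type u} [AddCommGroup G] [Module R G]
  [AddCommGroup M] [Module R M] [AddCommGroup Y] [Module R Y] [AddCommGroup Z] [Module R Z]

theorem self : InAdd R G G :=
  ⟨1, LinearMap.proj 0, LinearMap.pi fun _ => LinearMap.id, rfl⟩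

theorem precompEnd_injective (hY : InAdd R G Y) :
    Function.Injective (precompEnd (G := G) : (M →ₗ[R] Y) → _) := by
  obtain ⟨m, p, s, hps⟩ := hY
  intro a b hab
  have hs : s ∘ₗ a = s ∘ₗ b := by
    ext x i
    exact LinearMap.congr_fun (LinearMap.congr_fun hab (LinearMap.proj i ∘ₗ s)) x
  rw [← LinearMap.id_comp a, ← LinearMap.id_comp b, ← hps, LinearMap.comp_assoc,
    LinearMap.comp_assoc, hs]

theorem projective_hom (hY : InAdd R G Y) : Module.Projective (Module.End R G) (Y →ₗ[R] G) := by
  obtain ⟨m, p, s, hps⟩ := hY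
  have : Module.Projective (Module.End R G) ((Fin m → G) →ₗ[R] G) :=
    .of_equiv (LinearMap.lsum R (fun _ : Fin m => G) (Module.End R G))
  exact .of_split (precompEnd p) (precompEnd s) (by rw [← precompEnd_comp, hps, precompEnd_id])

theorem exists_precompEnd_eq (hY : InAdd R G Y)
    (φ : (Y →ₗ[R] G) →ₗ[Module.End R G] (M →ₗ[R] G)) :
    ∃ h : M →ₗ[R] Y, precompEnd h = φ := by
  obtain ⟨m, p, s, hps⟩ := hY
  -- `h` applies `φ` to the coordinate functions of `Y ⊆ G^m`
  refine ⟨p ∘ₗ LinearMap.pi fun i => φ (LinearMap.proj i ∘ₗ s), LinearMap.ext fun f => ?_⟩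
  conv_rhs => rw [← sum_smul_comp_single_eq hps f]
  ext y
  simp only [precompEnd_apply, LinearMap.coe_comp, Function.comp_apply, map_sum, map_smul,
    LinearMap.sum_apply, LinearMap.smul_apply, Module.End.smul_def, LinearMap.coe_single]
  rw [← map_sum, ← map_sum, Finset.univ_sum_single]
  rfl

theorem bijective_of_bijective_precompEnd (hY : InAdd R G Y) {h : Y →ₗ[R] Y}
    (hh : Function.Bijective (precompEnd (G := G) h)) : Function.Bijective h := by
  let E := LinearEquiv.ofBijective (precompEnd (G := G) h) hh
  obtain ⟨h', hh'⟩ := hY.exists_precompEnd_eq E.symm.toLinearMap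
  refine Function.bijective_iff_has_inverse.mpr
    ⟨h', fun y => LinearMap.congr_fun (?_ : h' ∘ₗ h = LinearMap.id) y,
      fun y => LinearMap.congr_fun (?_ : h ∘ₗ h' = LinearMap.id) y⟩ <;>
  refine hY.precompEnd_injective ?_ <;> rw [precompEnd_comp, precompEnd_id, hh']
  · exact LinearMap.ext E.apply_symm_apply
  · exact LinearMap.ext E.symm_apply_apply

theorem exists_comp_eq_of_surjective_precompEnd (hZ : InAdd R G Z) {g : M →ₗ[R] Y}
    (hg : Function.Surjective (precompEnd (G := G) g)) (u : M →ₗ[R] Z) :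
    ∃ v : Y →ₗ[R] Z, v ∘ₗ g = u := by
  obtain ⟨n, p, s, hps⟩ := hZ
  choose v hv using fun i : Fin n => hg (LinearMap.proj i ∘ₗ s ∘ₗ u)
  refine ⟨p ∘ₗ LinearMap.pi v, ?_⟩
  have : LinearMap.pi v ∘ₗ g = s ∘ₗ u := by
    ext x i
    exact LinearMap.congr_fun (hv i) x
  rw [LinearMap.comp_assoc, this, ← LinearMap.comp_assoc, hps, LinearMap.id_comp]

end InAdd

theorem minimal_leftApprox_iff_projectiveCover_general
    {A : Type u} [Ring A]
    (G : Type u) [AddCommGroup G] [Module Aᵐᵒᵖ G]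
    {M Y : Type u}
    [AddCommGroup M] [Module Aᵐᵒᵖ M]
    [AddCommGroup Y] [Module Aᵐᵒᵖ Y]
    (hY : InAdd Aᵐᵒᵖ G Y) (g : M →ₗ[Aᵐᵒᵖ] Y) :
    ((∀ (Z : Type u) [AddCommGroup Z] [Module Aᵐᵒᵖ Z], InAdd Aᵐᵒᵖ G Z →
        ∀ u : M →ₗ[Aᵐᵒᵖ] Z, ∃ v : Y →ₗ[Aᵐᵒᵖ] Z, v.comp g = u) ∧ LeftMinimal g)
      ↔ IsProjectiveCover (precompEnd (G := G) g) := by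
  constructor
  · rintro ⟨happrox, hmin⟩
    refine ⟨hY.projective_hom, fun u => happrox G InAdd.self u, fun φ hφ => ?_⟩
    obtain ⟨h, rfl⟩ := hY.exists_precompEnd_eq φ
    refine bijective_precompEnd_of_bijective (hmin h (hY.precompEnd_injective ?_))
    rwa [precompEnd_comp]
  · rintro ⟨-, hsurj, hmin⟩
    refine ⟨fun Z _ _ hZ => hZ.exists_comp_eq_of_surjective_precompEnd hsurj, fun h hh => ?_⟩
    refine hY.bijective_of_bijective_precompEnd (hmin _ ?_)
    rw [← precompEnd_comp, hh]

/-- For `Y ∈ add G`, a morphism `g : M → Y` is a minimal left `add G`-approximation of `M`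
iff `Hom_A(g, G) : Hom_A(Y, G) → Hom_A(M, G)` is a projective cover of `Hom_A(M, G)`
over `Λ = End_A(G)` (i.e. in the category of right `Λ^op`-modules). -/
theorem minimal_leftApprox_iff_projectiveCover
    {k : Type u} {A : Type u} [Field k] [Ring A] [Algebra k A] [FiniteDimensional k A]
    (G : Type u) [AddCommGroup G] [Module Aᵐᵒᵖ G] [Module k G] [IsScalarTower k Aᵐᵒᵖ G]
    [FiniteDimensional k G]
    {M Y : Type u}
    [AddCommGroup M] [Module Aᵐᵒᵖ M] [Module k M] [IsScalarTower k Aᵐᵒᵖ M]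
    [FiniteDimensional k M]
    [AddCommGroup Y] [Module Aᵐᵒᵖ Y] [Module k Y] [IsScalarTower k Aᵐᵒᵖ Y]
    [FiniteDimensional k Y]
    (hY : InAdd Aᵐᵒᵖ G Y) (g : M →ₗ[Aᵐᵒᵖ] Y) :
    ((∀ (Z : Type u) [AddCommGroup Z] [Module Aᵐᵒᵖ Z], InAdd Aᵐᵒᵖ G Z →
        ∀ u : M →ₗ[Aᵐᵒᵖ] Z, ∃ v : Y →ₗ[Aᵐᵒᵖ] Z, v.comp g = u) ∧ LeftMinimal g)
      ↔ IsProjectiveCover (precompEnd (G := G) g) :=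
  minimal_leftApprox_iff_projectiveCover_general G hY g
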